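/- arXiv:1705.01641 — 2 statements merged into one kernel-verified Lean document; each statement's English description precedes it below -/
import Mathlib

section
/- Let n ≥ 2 and let σ be a permutation of {1,…,n} with σ(1) = 1 (a standard permutation). Then: (1) (L^i σ)(1) = 1 for every i ≥ 0; (2) L^{n−1}σ = σ, and the n−1 permutations σ, Lσ, L²σ, …, L^{n−2}σ (the standard family of σ) are pairwise distinct; (3) there is exactly one index i with 0 ≤ i ≤ n−2 such that (L^i σ)(n) = n. -/
open Equiv

namespace Rauzy

/-- `intervalCycle n a b` is the permutation of `Fin n` sending `j ↦ j+1` for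
`a ≤ j < b`, sending `b ↦ a`, and fixing everything outside the interval `[a,b]`.
(It is the identity when `¬ (a ≤ b ∧ b < n)`.) -/
def intervalCycle (n a b : ℕ) : Equiv.Perm (Fin n) :=
  if hab : a ≤ b ∧ b < n then
    { toFun := fun j =>
        ⟨if a ≤ j.val ∧ j.val < b then j.val + 1 else if j.val = b then a else j.val,
          by have := j.isLt; split_ifs <;> omega⟩
      invFun := fun j =>
        ⟨if a < j.val ∧ j.val ≤ b then j.val - 1 else if j.val = a then b else j.val,
          by have := j.isLt; split_ifs <;> omega⟩
      left_inv := by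
        intro j
        have hj := j.isLt
        apply Fin.ext
        simp only [Fin.val_mk]
        split_ifs <;> omega
      right_inv := by
        intro j
        have hj := j.isLt
        apply Fin.ext
        simp only [Fin.val_mk]
        split_ifs <;> omega }
  else 1

/-- The Rauzy operator `L`: in 1-indexed terms, `L σ = γ ∘ σ` where `γ` fixes every
`j ≤ σ(1)`, maps `j ↦ j+1` for `σ(1) < j < n`, and maps `n ↦ σ(1)+1`.
(Everything here is 0-indexed, so `σ(1)` is `σ 0`, and `γ` is the cycle
`intervalCycle n (σ(1)+1) (n-1)` in 0-indexed terms.) -/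
def Lop {n : ℕ} (σ : Equiv.Perm (Fin n)) : Equiv.Perm (Fin n) :=
  if h : 0 < n then intervalCycle n ((σ ⟨0, h⟩).val + 1) (n - 1) * σ else σ

/-- The Rauzy operator `R`: in 1-indexed terms, `R σ = σ ∘ δ` where `δ` fixes every
`i ≥ σ⁻¹(n)`, maps `i ↦ i+1` for `1 ≤ i < σ⁻¹(n)−1`, and maps `σ⁻¹(n)−1 ↦ 1`. -/
def Rop {n : ℕ} (σ : Equiv.Perm (Fin n)) : Equiv.Perm (Fin n) :=
  if h : 0 < n then σ * intervalCycle n 0 ((σ.symm ⟨n - 1, by omega⟩).val - 1) else σ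

/-- The extended Rauzy operator `L' σ = (L (σ⁻¹))⁻¹`. -/
def Lext {n : ℕ} (σ : Equiv.Perm (Fin n)) : Equiv.Perm (Fin n) := (Lop σ⁻¹)⁻¹

/-- The extended Rauzy operator `R' σ = (R (σ⁻¹))⁻¹`. -/
def Rext {n : ℕ} (σ : Equiv.Perm (Fin n)) : Equiv.Perm (Fin n) := (Rop σ⁻¹)⁻¹

/-- `σ` and `τ` are in the same Rauzy class, i.e. `τ = w σ` for a finite word `w` in
`L, R, L⁻¹, R⁻¹`: the equivalence relation generated by the operators `L` and `R`. -/
def REquiv {n : ℕ} : Equiv.Perm (Fin n) → Equiv.Perm (Fin n) → Prop :=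
  Relation.EqvGen fun σ τ => τ = Lop σ ∨ τ = Rop σ

/-- `σ` and `τ` are in the same extended Rauzy class, i.e. related by a finite word in
`L, R, L', R'` and their inverses. -/
def ExtEquiv {n : ℕ} : Equiv.Perm (Fin n) → Equiv.Perm (Fin n) → Prop :=
  Relation.EqvGen fun σ τ => τ = Lop σ ∨ τ = Rop σ ∨ τ = Lext σ ∨ τ = Rext σ

/-- `σ` is irreducible: in 1-indexed terms, for no `1 ≤ k < n` does
`σ({1,…,k}) = {n−k+1,…,n}` hold. -/
def Irreducible {n : ℕ} (σ : Equiv.Perm (Fin n)) : Prop :=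
  ∀ k : ℕ, 0 < k → k < n →
    Finset.image σ (Finset.univ.filter fun i : Fin n => i.val < k) ≠
      Finset.univ.filter fun i : Fin n => n - k ≤ i.val

/-- The successor map of the cycle-invariant construction, acting on the set of top
arcs of the diagram of `σ` together with a marker for the rank path.

The element `x = 0` represents the two open endpoints of the rank path (top-left and
bottom-right), and an element `x ∈ {1,…,n−1}` represents the top arc joining the top
points `x` and `x+1` (1-indexed).  Starting from a top arc (or from the top-left
endpoint), the path of the diagram goes down from the top black point `x+1`
(1-indexed) along an edge, either reaching the bottom-right endpoint (if
`σ⁻¹(x+1) = n`), or continuing through a bottom arc and a second edge upward —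
possibly also crossing the `−1` mark — to the next top arc. -/
def nextArc {n : ℕ} (σ : Equiv.Perm (Fin n)) (x : Fin n) : Fin n :=
  have hn : 0 < n := Nat.lt_of_le_of_lt (Nat.zero_le _) x.isLt
  if hj : (σ.symm x).val = n - 1 then
    -- the rank path ends at the bottom-right endpoint; close the orbit back to `0`
    ⟨0, hn⟩
  else
    have hlt : (σ.symm x).val + 1 < n := by have := (σ.symm x).isLt; omega
    have hv := (σ ⟨(σ.symm x).val + 1, hlt⟩).isLt
    if hm : (σ ⟨(σ.symm x).val + 1, hlt⟩).val = n - 1 then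
      -- the upward edge reaches the top-right point: cross the `−1` mark, then
      -- follow the edge from the bottom-left point, reaching top arc `σ(1)` (1-indexed)
      ⟨(σ ⟨0, hn⟩).val + 1, by
        have h0 : σ ⟨0, hn⟩ ≠ σ ⟨(σ.symm x).val + 1, hlt⟩ := by
          intro hcontra
          have h1 := σ.injective hcontra
          simp only [Fin.mk.injEq] at h1
          omega
        have h2 : (σ ⟨0, hn⟩).val ≠ n - 1 := by
          intro hcontra
          exact h0 (Fin.ext (by rw [hcontra, hm]))
        have h3 := (σ ⟨0, hn⟩).isLt
        omega⟩
    else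
      -- reach the top arc whose left (white) endpoint is the top point `σ(j+1)` (1-indexed)
      ⟨(σ ⟨(σ.symm x).val + 1, hlt⟩).val + 1, by omega⟩

/-- The orbit of `x` under the successor map of the cycle-invariant construction. -/
def arcOrbit {n : ℕ} (σ : Equiv.Perm (Fin n)) (x : Fin n) : Finset (Fin n) :=
  (Finset.range n).image fun k => (nextArc σ)^[k] x

/-- The rank `r(σ)`: the number of top arcs lying on the open (rank) path of the
cycle-invariant construction, i.e. the size of the orbit of the marker `0` minus one. -/
def rank {n : ℕ} (σ : Equiv.Perm (Fin n)) : ℕ :=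
  if h : 0 < n then (arcOrbit σ ⟨0, h⟩).card - 1 else 0

/-- The cycle invariant `λ(σ)`: the multiset of the lengths (numbers of top arcs) of
the closed cycles of the cycle-invariant construction.  Each closed cycle is an orbit
of `nextArc σ` other than the orbit of the marker `0` (which is the rank path), counted
once via its minimal representative, and its length is the size of the orbit. -/
def cycleInv {n : ℕ} (σ : Equiv.Perm (Fin n)) : Multiset ℕ :=
  if h : 0 < n then
    Multiset.map (fun x => (arcOrbit σ x).card)
      (Finset.univ.filter fun x : Fin n =>
        x ∉ arcOrbit σ ⟨0, h⟩ ∧ ∀ y ∈ arcOrbit σ x, x ≤ y).val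
  else 0

/-- The extended cycle invariant `λ'(σ)`: the multiset `λ(σ)` together with one
additional part equal to the rank `r(σ)`. -/
def cycleInvExt {n : ℕ} (σ : Equiv.Perm (Fin n)) : Multiset ℕ := rank σ ::ₘ cycleInv σ

/-- `chi σ I` is `χ(I)`: the number of pairs `i < j` in `I` with `σ i < σ j`
(pairs of non-crossing edges of the diagram of `σ`). -/
def chi {n : ℕ} (σ : Equiv.Perm (Fin n)) (I : Finset (Fin n)) : ℕ :=
  ((I ×ˢ I).filter fun p => p.1 < p.2 ∧ σ p.1 < σ p.2).card

/-- The Arf invariant `Ā(σ) = Σ_{I ⊆ {1,…,n}} (−1)^(|I| + χ(I))`. -/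
def arfBar {n : ℕ} (σ : Equiv.Perm (Fin n)) : ℤ :=
  ∑ I ∈ (Finset.univ : Finset (Fin n)).powerset, (-1 : ℤ) ^ (I.card + chi σ I)

/-- The companion Arf sum `A(σ) = Σ_{I ⊆ {1,…,n}} (−1)^(χ(I))`. -/
def arfA {n : ℕ} (σ : Equiv.Perm (Fin n)) : ℤ :=
  ∑ I ∈ (Finset.univ : Finset (Fin n)).powerset, (-1 : ℤ) ^ (chi σ I)

/-- The sign invariant `s(σ) = sign(Ā(σ)) ∈ {−1, 0, +1}`. -/
def sgn {n : ℕ} (σ : Equiv.Perm (Fin n)) : ℤ := (arfBar σ).sign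

/-- The surgery operator `T`, mapping a permutation `τ` of `{1,…,n}` to the permutation
`T τ` of `{1,…,n+2}` defined (1-indexed) by `(T τ)(1) = τ(1)+2`, `(T τ)(2) = 1`, and,
for `1 ≤ i ≤ n`, `(T τ)(i+2) = τ(i)+1` if `τ(i) ≤ τ(1)` and `(T τ)(i+2) = τ(i)+2`
otherwise.  It is built here as `α ∘ ρ ∘ β`, where `β` rearranges the positions
(0-indexed: `0 ↦ n+1`, `1 ↦ n`, `k+2 ↦ k`), `ρ` acts as `τ` on the first `n` points
and fixes the last two, and `α` adjusts the values (0-indexed: `v ↦ v+1` for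
`v ≤ τ(0)`, `v ↦ v+2` for `τ(0) < v ≤ n−1`, `n ↦ 0`, `n+1 ↦ τ(0)+2`). -/
def Toper {n : ℕ} (τ : Equiv.Perm (Fin n)) : Equiv.Perm (Fin (n + 2)) :=
  if h : 0 < n then
    (intervalCycle (n + 2) ((τ ⟨0, h⟩).val + 2) (n + 1) * intervalCycle (n + 2) 0 n) *
      (finSumFinEquiv.permCongr (Equiv.sumCongr τ (1 : Equiv.Perm (Fin 2)))) *
      (Equiv.swap (⟨n, by omega⟩ : Fin (n + 2)) ⟨n + 1, by omega⟩ *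
        ((finRotate (n + 2))⁻¹) ^ 2)
  else 1

/-- `addOp σ l` is the permutation `add_ℓ(σ)` of `{1,…,n+1}` (with, 1-indexed,
`ℓ = l+1`), whose one-line notation is `(σ(1)+1, …, σ(ℓ−1)+1, 1, σ(ℓ)+1, …, σ(n)+1)`.
It is built as `α ∘ ρ ∘ β⁻¹` where `β` rearranges positions, `ρ` acts as `σ` on the
first `n` points, and `α` shifts all values up by one cyclically. -/
def addOp {n : ℕ} (σ : Equiv.Perm (Fin n)) (l : Fin (n + 1)) : Equiv.Perm (Fin (n + 1)) :=
  intervalCycle (n + 1) 0 n *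
    (finSumFinEquiv.permCongr (Equiv.sumCongr σ (1 : Equiv.Perm (Fin 1)))) *
    (intervalCycle (n + 1) l.val n)⁻¹

/-- The permutation `id'_n` of `{1,…,n}` (for `n ≥ 3`), with (1-indexed) values
`id'_n(1) = 1`, `id'_n(2) = n−1`, `id'_n(n) = n`, and `id'_n(i) = i−1` for
`3 ≤ i ≤ n−1`. -/
def idP (n : ℕ) : Equiv.Perm (Fin n) :=
  if h : 3 ≤ n then
    { toFun := fun i =>
        ⟨if i.val = 0 then 0 else if i.val = 1 then n - 2
          else if i.val = n - 1 then n - 1 else i.val - 1,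
          by have := i.isLt; split_ifs <;> omega⟩
      invFun := fun j =>
        ⟨if j.val = 0 then 0 else if j.val = n - 2 then 1
          else if j.val = n - 1 then n - 1 else j.val + 1,
          by have := j.isLt; split_ifs <;> omega⟩
      left_inv := by
        intro i
        have hi := i.isLt
        apply Fin.ext
        simp only [Fin.val_mk]
        split_ifs <;> (try contradiction) <;> omega
      right_inv := by
        intro j
        have hj := j.isLt
        apply Fin.ext
        simp only [Fin.val_mk]
        split_ifs <;> (try contradiction) <;> omega }
  else 1

/-- The set of descents of `σ`: positions `i` (1-indexed, `i < n`) such that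
`σ(i+1) = σ(i) − 1`. -/
def descentSet {n : ℕ} (σ : Equiv.Perm (Fin n)) : Finset (Fin n) :=
  Finset.univ.filter fun i =>
    ∃ j : Fin n, j.val = i.val + 1 ∧ (σ j).val + 1 = (σ i).val

/-- The set of special descents of `σ`: positions `i` (1-indexed, `i < n`) such that
`σ(i+1) = n` and `σ(1) = σ(i) − 1`. -/
def specialDescentSet {n : ℕ} (σ : Equiv.Perm (Fin n)) : Finset (Fin n) :=
  Finset.univ.filter fun i =>
    ∃ j z : Fin n, z.val = 0 ∧ j.val = i.val + 1 ∧ (σ j).val = n - 1 ∧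
      (σ z).val + 1 = (σ i).val

/-- The positions of the edges kept when forming the primitive of `σ`:
those which are neither descents nor special descents. -/
def keepSet {n : ℕ} (σ : Equiv.Perm (Fin n)) : Finset (Fin n) :=
  Finset.univ.filter fun i => i ∉ descentSet σ ∧ i ∉ specialDescentSet σ

/-- The size of the primitive of `σ`. -/
def primSize {n : ℕ} (σ : Equiv.Perm (Fin n)) : ℕ := (keepSet σ).card

/-- The primitive `prim(σ)` of `σ`: the permutation induced by the edges `(i, σ(i))`
of `σ` which are neither descents nor special descents, after order-preserving
relabelling of the remaining positions and of the remaining values. -/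
def primPerm {n : ℕ} (σ : Equiv.Perm (Fin n)) : Equiv.Perm (Fin (primSize σ)) :=
  ((keepSet σ).orderIsoOfFin rfl).toEquiv.trans
    ((Equiv.subtypeEquiv (p := fun x => x ∈ keepSet σ)
        (q := fun y => y ∈ Finset.image σ (keepSet σ)) σ
        (fun _ => (Function.Injective.mem_finset_image σ.injective).symm)).trans
      ((Finset.image σ (keepSet σ)).orderIsoOfFin
        (by rw [Finset.card_image_of_injective _ σ.injective]; rfl)).toEquiv.symm)


lemma intervalCycle_apply_val {n : ℕ} (a b : ℕ) (hab : a ≤ b) (hb : b < n) (j : Fin n) :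
    ((intervalCycle n a b) j).val =
      if a ≤ j.val ∧ j.val < b then j.val + 1 else if j.val = b then a else j.val := by
  simp only [intervalCycle, dif_pos (⟨hab, hb⟩ : a ≤ b ∧ b < n), Equiv.coe_fn_mk]

lemma succ_mod_aux (a k : ℕ) : (a + 1) % k = (a % k + 1) % k := by
  conv_lhs => rw [← Nat.div_add_mod a k]
  rw [Nat.add_assoc, Nat.mul_add_mod]

/-- Properties of the standard family of a standard permutation `σ` (with `σ(1) = 1`,
1-indexed): every `L^i σ` is standard; `L^(n−1) σ = σ`; the `n−1` permutations
`σ, Lσ, …, L^(n−2) σ` are pairwise distinct; and exactly one of them fixes `n`. -/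
theorem standard_family_properties (n : ℕ) (hn : 2 ≤ n) (σ : Equiv.Perm (Fin n))
    (hσ : (σ ⟨0, by omega⟩).val = 0) :
    (∀ i : ℕ, ((Lop^[i] σ) ⟨0, by omega⟩).val = 0) ∧
    Lop^[n - 1] σ = σ ∧
    (∀ i j : ℕ, i < n - 1 → j < n - 1 → Lop^[i] σ = Lop^[j] σ → i = j) ∧
    (∃! i : ℕ, i < n - 1 ∧ ((Lop^[i] σ) ⟨n - 1, by omega⟩).val = n - 1) := by
  have hn0 : 0 < n := by omega
  set c : Equiv.Perm (Fin n) := intervalCycle n 1 (n - 1) with hc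
  have hcval : ∀ j : Fin n, (c j).val =
      if j.val = 0 then 0 else if j.val = n - 1 then 1 else j.val + 1 := by
    intro j
    rw [hc, intervalCycle_apply_val 1 (n - 1) (by omega) (by omega)]
    have := j.isLt
    split_ifs <;> omega
  have hpow : ∀ (i : ℕ) (j : Fin n), ((c ^ i) j).val =
      if j.val = 0 then 0 else (j.val - 1 + i) % (n - 1) + 1 := by
    intro i
    induction i with
    | zero =>
      intro j
      have hj := j.isLt
      simp only [pow_zero, Equiv.Perm.one_apply, Nat.add_zero]
      split_ifs with h
      · exact h
      · rw [Nat.mod_eq_of_lt (by omega)]; omega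
    | succ i ih =>
      intro j
      have hj := j.isLt
      rw [pow_succ, Equiv.Perm.mul_apply, ih (c j)]
      have hcj := hcval j
      by_cases h0 : j.val = 0
      · rw [if_pos h0, if_pos (by rw [hcj, if_pos h0])]
      · rw [if_neg h0] at hcj
        rw [if_neg h0]
        by_cases h1 : j.val = n - 1
        · rw [if_pos h1] at hcj
          rw [if_neg (by omega), hcj]
          have h2 : j.val - 1 + (i + 1) = (n - 1) + i := by omega
          rw [h2, Nat.add_mod_left]
          norm_num
        · rw [if_neg h1] at hcj
          rw [if_neg (by omega), hcj]
          have h2 : j.val + 1 - 1 + i = j.val - 1 + (i + 1) := by omega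
          rw [h2]
  have hL : ∀ τ : Equiv.Perm (Fin n), (τ ⟨0, hn0⟩).val = 0 → Lop τ = c * τ := by
    intro τ hτ
    rw [Lop, dif_pos hn0, hτ]
  have hstd : ∀ i : ℕ, ((Lop^[i] σ) ⟨0, hn0⟩).val = 0 ∧ Lop^[i] σ = c ^ i * σ := by
    intro i
    induction i with
    | zero => simpa using hσ
    | succ i ih =>
      obtain ⟨h1, h2⟩ := ih
      have h3 : Lop^[i + 1] σ = c ^ (i + 1) * σ := by
        rw [Function.iterate_succ_apply', hL _ h1, h2, ← mul_assoc, ← pow_succ']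
      refine ⟨?_, h3⟩
      rw [h3, Equiv.Perm.mul_apply]
      have := hpow (i + 1) (σ ⟨0, hn0⟩)
      rw [if_pos hσ] at this
      exact this
  refine ⟨fun i => (hstd i).1, ?_, ?_, ?_⟩
  · rw [(hstd (n - 1)).2]
    ext x
    rw [Equiv.Perm.mul_apply]
    have h := hpow (n - 1) (σ x)
    have hx := (σ x).isLt
    by_cases h0 : (σ x).val = 0
    · rw [if_pos h0] at h; omega
    · rw [if_neg h0] at h
      have : (σ x).val - 1 + (n - 1) = (n - 1) + ((σ x).val - 1) := by omega
      rw [this, Nat.add_mod_left, Nat.mod_eq_of_lt (by omega)] at h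
      omega
  · intro i j hi hj hEq
    rw [(hstd i).2, (hstd j).2] at hEq
    have h1n : (1 : ℕ) < n := by omega
    have := congrArg (fun τ : Equiv.Perm (Fin n) => (τ (σ.symm ⟨1, h1n⟩)).val) hEq
    simp only [Equiv.Perm.mul_apply, Equiv.apply_symm_apply] at this
    rw [hpow i ⟨1, h1n⟩, hpow j ⟨1, h1n⟩] at this
    simp only [if_neg (by omega : ¬ (1 : ℕ) = 0)] at this
    rw [Nat.mod_eq_of_lt (by omega), Nat.mod_eq_of_lt (by omega)] at this
    omega
  · set v : ℕ := (σ ⟨n - 1, by omega⟩).val with hv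
    have hvlt : v < n := (σ ⟨n - 1, by omega⟩).isLt
    have hv1 : 1 ≤ v := by
      rcases Nat.eq_zero_or_pos v with h | h
      · exfalso
        have : σ ⟨n - 1, by omega⟩ = σ ⟨0, hn0⟩ := Fin.ext (by
          show v = (σ ⟨0, hn0⟩).val; omega)
        have := σ.injective this
        simp only [Fin.mk.injEq] at this
        omega
      · exact h
    have hcond : ∀ i : ℕ, ((Lop^[i] σ) ⟨n - 1, by omega⟩).val = (v - 1 + i) % (n - 1) + 1 := by
      intro i
      rw [(hstd i).2, Equiv.Perm.mul_apply, hpow i, if_neg (by omega), ← hv]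
    refine ⟨n - 1 - v, ⟨by omega, ?_⟩, ?_⟩
    · rw [hcond]
      have : v - 1 + (n - 1 - v) = n - 2 := by omega
      rw [this, Nat.mod_eq_of_lt (by omega)]
      omega
    · rintro j ⟨hj, hjval⟩
      rw [hcond] at hjval
      have hmod : (v - 1 + j) % (n - 1) = n - 2 := by omega
      have hdiv := Nat.div_add_mod (v - 1 + j) (n - 1)
      have hq : (v - 1 + j) / (n - 1) < 2 :=
        Nat.div_lt_of_lt_mul (by omega)
      interval_cases h : ((v - 1 + j) / (n - 1)) <;> omega

end Rauzy
end

section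
/- Let σ be an irreducible permutation of {1,…,n}. The number of parts of λ(σ) equal to 1 equals the number of descents of σ plus the number of special descents of σ. In particular, λ(σ) contains no part equal to 1 if and only if σ has neither descents nor special descents. -/
open Equiv

namespace Rauzy

section Aux
variable {n : ℕ} (σ : Equiv.Perm (Fin n))

lemma nextArc_last {x : Fin n} (hj : (σ.symm x).val = n - 1) :
    (nextArc σ x).val = 0 := by
  unfold nextArc
  dsimp only
  rw [dif_pos hj]

lemma nextArc_mark {x : Fin n} (hj : (σ.symm x).val ≠ n - 1)
    (hlt : (σ.symm x).val + 1 < n)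
    (hm : (σ ⟨(σ.symm x).val + 1, hlt⟩).val = n - 1) :
    (nextArc σ x).val = (σ ⟨0, by omega⟩).val + 1 := by
  unfold nextArc
  dsimp only
  rw [dif_neg hj, dif_pos hm]

lemma nextArc_mid {x : Fin n} (hj : (σ.symm x).val ≠ n - 1)
    (hlt : (σ.symm x).val + 1 < n)
    (hm : (σ ⟨(σ.symm x).val + 1, hlt⟩).val ≠ n - 1) :
    (nextArc σ x).val = (σ ⟨(σ.symm x).val + 1, hlt⟩).val + 1 := by
  unfold nextArc
  dsimp only
  rw [dif_neg hj, dif_neg hm]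

end Aux

section Aux2
variable {n : ℕ} (σ : Equiv.Perm (Fin n))

lemma descent_disjoint : Disjoint (descentSet σ) (specialDescentSet σ) := by
  rw [Finset.disjoint_left]
  intro i hd hs
  simp only [descentSet, specialDescentSet, Finset.mem_filter, Finset.mem_univ, true_and] at hd hs
  obtain ⟨j, hj1, hj2⟩ := hd
  obtain ⟨j', z, hz, hj1', hj2', hj3'⟩ := hs
  have hjj : j = j' := Fin.ext (by omega)
  subst hjj
  have := (σ i).isLt
  have := i.isLt
  omega

lemma fixed_of_mem {x : Fin n}
    (hx : x ∈ Finset.image σ (descentSet σ ∪ specialDescentSet σ)) :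
    nextArc σ x = x ∧ x.val ≠ 0 := by
  simp only [Finset.mem_image, Finset.mem_union] at hx
  obtain ⟨i, hi, rfl⟩ := hx
  have hs : σ.symm (σ i) = i := σ.symm_apply_apply i
  rcases hi with hi | hi
  · simp only [descentSet, Finset.mem_filter, Finset.mem_univ, true_and] at hi
    obtain ⟨j, hj1, hj2⟩ := hi
    have hjlt := j.isLt
    have hilt := (σ i).isLt
    have hjv := (σ j).isLt
    have hj0 : (σ.symm (σ i)).val ≠ n - 1 := by rw [hs]; omega
    have hlt : (σ.symm (σ i)).val + 1 < n := by rw [hs]; omega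
    have hjeq : (⟨(σ.symm (σ i)).val + 1, hlt⟩ : Fin n) = j := by
      apply Fin.ext; simp only [hs]; omega
    have hm : (σ ⟨(σ.symm (σ i)).val + 1, hlt⟩).val ≠ n - 1 := by
      rw [hjeq]; omega
    have h := nextArc_mid σ hj0 hlt hm
    rw [hjeq] at h
    refine ⟨Fin.ext ?_, by omega⟩
    rw [h]; omega
  · simp only [specialDescentSet, Finset.mem_filter, Finset.mem_univ, true_and] at hi
    obtain ⟨j, z, hz, hj1, hj2, hj3⟩ := hi
    have hjlt := j.isLt
    have hilt := (σ i).isLt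
    have hj0 : (σ.symm (σ i)).val ≠ n - 1 := by rw [hs]; omega
    have hlt : (σ.symm (σ i)).val + 1 < n := by rw [hs]; omega
    have hjeq : (⟨(σ.symm (σ i)).val + 1, hlt⟩ : Fin n) = j := by
      apply Fin.ext; simp only [hs]; omega
    have hm : (σ ⟨(σ.symm (σ i)).val + 1, hlt⟩).val = n - 1 := by
      rw [hjeq]; omega
    have h := nextArc_mark σ hj0 hlt hm
    have hzeq : (⟨0, by omega⟩ : Fin n) = z := by
      apply Fin.ext; show 0 = z.val; omega
    rw [hzeq] at h
    refine ⟨Fin.ext ?_, by omega⟩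
    rw [h]; omega

lemma mem_of_fixed {x : Fin n} (h1 : nextArc σ x = x) (h2 : x.val ≠ 0) :
    x ∈ Finset.image σ (descentSet σ ∪ specialDescentSet σ) := by
  have hx : σ (σ.symm x) = x := σ.apply_symm_apply x
  have hix := (σ.symm x).isLt
  by_cases hj : (σ.symm x).val = n - 1
  · have := nextArc_last σ hj
    rw [h1] at this; omega
  · have hlt : (σ.symm x).val + 1 < n := by omega
    by_cases hm : (σ ⟨(σ.symm x).val + 1, hlt⟩).val = n - 1
    · have h := nextArc_mark σ hj hlt hm
      rw [h1] at h
      refine Finset.mem_image.mpr ⟨σ.symm x, Finset.mem_union_right _ ?_, hx⟩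
      simp only [specialDescentSet, Finset.mem_filter, Finset.mem_univ, true_and]
      refine ⟨⟨(σ.symm x).val + 1, hlt⟩, ⟨0, by omega⟩, rfl, rfl, hm, ?_⟩
      rw [hx]
      exact h.symm
    · have h := nextArc_mid σ hj hlt hm
      rw [h1] at h
      refine Finset.mem_image.mpr ⟨σ.symm x, Finset.mem_union_left _ ?_, hx⟩
      simp only [descentSet, Finset.mem_filter, Finset.mem_univ, true_and]
      exact ⟨⟨(σ.symm x).val + 1, hlt⟩, rfl, by rw [hx]; omega⟩

lemma backinj {x y : Fin n} (hfix : nextArc σ x = x) (hx0 : x.val ≠ 0)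
    (h : nextArc σ y = x) : y = x := by
  have hx : σ (σ.symm x) = x := σ.apply_symm_apply x
  have hy : σ (σ.symm y) = y := σ.apply_symm_apply y
  have hix := (σ.symm x).isLt
  have hiy := (σ.symm y).isLt
  by_cases h1 : (σ.symm x).val = n - 1
  · have := nextArc_last σ h1; rw [hfix] at this; omega
  by_cases h1y : (σ.symm y).val = n - 1
  · have := nextArc_last σ h1y; rw [h] at this; omega
  have hlt : (σ.symm x).val + 1 < n := by omega
  have hlty : (σ.symm y).val + 1 < n := by omega
  by_cases hmx : (σ ⟨(σ.symm x).val + 1, hlt⟩).val = n - 1 <;>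
    by_cases hmy : (σ ⟨(σ.symm y).val + 1, hlty⟩).val = n - 1
  · -- both mark: positions map to n-1, hence equal
    have heq : (⟨(σ.symm x).val + 1, hlt⟩ : Fin n) = ⟨(σ.symm y).val + 1, hlty⟩ :=
      σ.injective (Fin.ext (by omega))
    have : σ.symm y = σ.symm x := Fin.ext (by
      have := congrArg Fin.val heq
      simp only [Fin.val_mk] at this
      omega)
    rw [← hx, ← hy, this]
  · have ha := nextArc_mark σ h1 hlt hmx
    have hb := nextArc_mid σ h1y hlty hmy
    rw [hfix] at ha; rw [h] at hb
    have heq : (⟨0, by omega⟩ : Fin n) = ⟨(σ.symm y).val + 1, hlty⟩ :=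
      σ.injective (Fin.ext (by omega))
    have := congrArg Fin.val heq
    simp only [Fin.val_mk] at this
    omega
  · have ha := nextArc_mid σ h1 hlt hmx
    have hb := nextArc_mark σ h1y hlty hmy
    rw [hfix] at ha; rw [h] at hb
    have heq : (⟨0, by omega⟩ : Fin n) = ⟨(σ.symm x).val + 1, hlt⟩ :=
      σ.injective (Fin.ext (by omega))
    have := congrArg Fin.val heq
    simp only [Fin.val_mk] at this
    omega
  · have ha := nextArc_mid σ h1 hlt hmx
    have hb := nextArc_mid σ h1y hlty hmy
    rw [hfix] at ha; rw [h] at hb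
    have heq : (⟨(σ.symm x).val + 1, hlt⟩ : Fin n) = ⟨(σ.symm y).val + 1, hlty⟩ :=
      σ.injective (Fin.ext (by omega))
    have : σ.symm y = σ.symm x := Fin.ext (by
      have := congrArg Fin.val heq
      simp only [Fin.val_mk] at this
      omega)
    rw [← hx, ← hy, this]

lemma arcOrbit_of_fixed {x : Fin n} (h : nextArc σ x = x) : arcOrbit σ x = {x} := by
  have hn : 0 < n := x.pos
  ext y
  simp only [arcOrbit, Finset.mem_image, Finset.mem_range, Finset.mem_singleton]
  constructor
  · rintro ⟨k, hk, rfl⟩; rw [Function.iterate_fixed h]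
  · rintro rfl; exact ⟨0, hn, rfl⟩

lemma not_mem_arcOrbit_zero {x : Fin n} (h : nextArc σ x = x) (h2 : x.val ≠ 0)
    (h3 : 0 < n) : x ∉ arcOrbit σ ⟨0, h3⟩ := by
  intro hx
  simp only [arcOrbit, Finset.mem_image, Finset.mem_range] at hx
  obtain ⟨k, hk, hkx⟩ := hx
  have key : ∀ m, (nextArc σ)^[m] ⟨0, h3⟩ = x → (⟨0, h3⟩ : Fin n) = x := by
    intro m
    induction m with
    | zero => intro hm; exact hm
    | succ m ih =>
      intro hm
      rw [Function.iterate_succ_apply'] at hm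
      exact ih (backinj σ h h2 hm)
  have hfin := key k hkx
  apply h2
  rw [← hfin]

end Aux2

/-- For an irreducible permutation `σ`, the number of parts of `λ(σ)` equal to `1`
equals the number of descents plus the number of special descents of `σ`. -/
theorem parts_one_eq_descents (n : ℕ) (σ : Equiv.Perm (Fin n)) (hσ : Irreducible σ) :
    (cycleInv σ).count 1 = (descentSet σ).card + (specialDescentSet σ).card := by
  rcases Nat.eq_zero_or_pos n with hn | hn
  · subst hn
    have h1 : descentSet σ = ∅ := Finset.eq_empty_of_isEmpty _
    have h2 : specialDescentSet σ = ∅ := Finset.eq_empty_of_isEmpty _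
    rw [h1, h2]
    unfold cycleInv
    rw [dif_neg (by omega)]
    simp
  · unfold cycleInv
    rw [dif_pos hn, Multiset.count_map]
    rw [← Finset.filter_val]
    show Finset.card _ = _
    have himg : Finset.filter (fun a => 1 = (arcOrbit σ a).card)
        (Finset.filter (fun x : Fin n =>
          x ∉ arcOrbit σ ⟨0, hn⟩ ∧ ∀ y ∈ arcOrbit σ x, x ≤ y) Finset.univ) =
        Finset.image σ (descentSet σ ∪ specialDescentSet σ) := by
      ext x
      simp only [Finset.mem_filter, Finset.mem_univ, true_and]
      constructor
      · rintro ⟨⟨hnot, -⟩, hcard⟩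
        have hx0 : x.val ≠ 0 := by
          intro h0
          apply hnot
          have hxe : x = (⟨0, hn⟩ : Fin n) := Fin.ext h0
          rw [hxe]
          simp only [arcOrbit, Finset.mem_image, Finset.mem_range]
          exact ⟨0, hn, rfl⟩
        have hxmem : x ∈ arcOrbit σ x := by
          simp only [arcOrbit, Finset.mem_image, Finset.mem_range]
          exact ⟨0, hn, rfl⟩
        have horb : arcOrbit σ x = {x} := by
          obtain ⟨a, ha⟩ := Finset.card_eq_one.mp hcard.symm
          rw [ha] at hxmem ⊢
          rw [Finset.mem_singleton.mp hxmem]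
        have hn2 : 1 < n := by have := x.isLt; omega
        have hfix : nextArc σ x = x := by
          have : nextArc σ x ∈ arcOrbit σ x := by
            simp only [arcOrbit, Finset.mem_image, Finset.mem_range]
            exact ⟨1, hn2, rfl⟩
          rw [horb, Finset.mem_singleton] at this
          exact this
        exact mem_of_fixed σ hfix hx0
      · intro hx
        obtain ⟨hfix, hx0⟩ := fixed_of_mem σ hx
        have horb := arcOrbit_of_fixed σ hfix
        refine ⟨⟨not_mem_arcOrbit_zero σ hfix hx0 hn, ?_⟩, ?_⟩
        · intro y hy
          rw [horb, Finset.mem_singleton] at hy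
          exact le_of_eq hy.symm
        · rw [horb, Finset.card_singleton]
    rw [himg, Finset.card_image_of_injective _ σ.injective,
      Finset.card_union_of_disjoint (descent_disjoint σ)]

end Rauzy
end
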